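/- For the general ferromagnetic XY model with nonnegative coupling constants J (Hamiltonian H_J(θ) = −∑_m J_m cos(mθ)), all correlation functions of the form ⟨cos(mθ)⟩_{V,J} are nonnegative. -/

import Mathlib

/-!
The Gibbs weight is `exp F` with `F = ∑ₖ J k * cos (k θ)`, so the numerator of `⟨cos (m θ)⟩`
is the limit of `∑_{n < N} ∫ cos (m θ) * F ^ n / n!`. Since
`2 cos a cos b = cos (a + b) + cos (a - b)`, each `cos (m θ) * F ^ n` is a combination of modes
`cos (w θ)` with nonnegative coefficients, and the integral of a mode over the torus `(-π, π]^V`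
is `(2π)^|V|` or `0`.
-/

open MeasureTheory Real

/-- The Hamiltonian of the general XY model on a finite vertex set `V`:
`H_J(θ) = −∑_m J_m cos(∑_x m_x θ_x)`, the sum being over finitely supported
integer-valued functions `m : V → ℤ`. -/
noncomputable def genXYHam {V : Type*} [Fintype V] (J : (V → ℤ) → ℝ) (θ : V → ℝ) : ℝ :=
  -∑ᶠ m : V → ℤ, J m * Real.cos (∑ x, (m x : ℝ) * θ x)

/-- The a priori measure: product of uniform measures on `(−π, π]`. -/
noncomputable def aprioriXY (V : Type*) [Fintype V] : Measure (V → ℝ) :=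
  Measure.pi fun _ : V => volume.restrict (Set.Ioc (-π) π)

/-- The Gibbs expectation `⟨f⟩_{V,J}` of the general XY model (density `e^{−H_J}`
with respect to the a priori product uniform measure on `(−π,π]^V`). -/
noncomputable def genXYExp {V : Type*} [Fintype V] (J : (V → ℤ) → ℝ)
    (f : (V → ℝ) → ℝ) : ℝ :=
  (∫ θ, f θ * Real.exp (-genXYHam J θ) ∂(aprioriXY V)) /
    (∫ θ, Real.exp (-genXYHam J θ) ∂(aprioriXY V))

open Finset Filter Topology
open scoped Nat

theorem integral_mul_exp_nonneg_of_integral_mul_pow_nonneg {α : Type*} [MeasurableSpace α]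
    {μ : Measure α} {f F : α → ℝ} {C : ℝ} (hf : Integrable f μ)
    (hF : AEStronglyMeasurable F μ) (hFC : ∀ x, |F x| ≤ C)
    (hpow : ∀ n : ℕ, 0 ≤ ∫ x, f x * F x ^ n ∂μ) :
    0 ≤ ∫ x, f x * exp (F x) ∂μ := by
  have hpartial : ∀ N, 0 ≤ ∫ x, f x * ∑ n ∈ range N, F x ^ n / n ! ∂μ := by
    intro N
    have hint : ∀ n, Integrable (fun x => f x * F x ^ n) μ := fun n =>
      hf.mul_bdd (hF.pow n) (c := C ^ n) (ae_of_all _ fun x => by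
        simpa [norm_pow] using pow_le_pow_left₀ (abs_nonneg _) (hFC x) n)
    simp_rw [mul_sum, ← mul_div_assoc]
    rw [integral_finsetSum _ fun n _ => (hint n).div_const _]
    exact sum_nonneg fun n _ => by rw [integral_div]; exact div_nonneg (hpow n) (by positivity)
  have hlim : Tendsto (fun N => ∫ x, f x * ∑ n ∈ range N, F x ^ n / n ! ∂μ) atTop
      (𝓝 (∫ x, f x * exp (F x) ∂μ)) := by
    refine tendsto_integral_of_dominated_convergence (fun x => exp C * |f x|)
      (fun N => hf.aestronglyMeasurable.mul ?_) (hf.abs.const_mul _) (fun N => ae_of_all _ ?_)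
      (ae_of_all _ fun x => ?_)
    · fun_prop
    · intro x
      have hsum : |∑ n ∈ range N, F x ^ n / n !| ≤ exp C := calc
        _ ≤ ∑ n ∈ range N, |F x| ^ n / n ! := by
          refine (abs_sum_le_sum_abs _ _).trans_eq (sum_congr rfl fun n _ => ?_)
          rw [abs_div, abs_pow, Nat.abs_cast]
        _ ≤ exp |F x| := Real.sum_le_exp_of_nonneg (abs_nonneg _) N
        _ ≤ exp C := Real.exp_le_exp.2 (hFC x)
      rw [Real.norm_eq_abs, abs_mul, mul_comm]
      exact mul_le_mul_of_nonneg_right hsum (abs_nonneg _)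
    · rw [Real.exp_eq_exp_ℝ]
      exact ((NormedSpace.expSeries_div_hasSum_exp (F x)).tendsto_sum_nat).const_mul _
  exact ge_of_tendsto' hlim hpartial

theorem integral_Ioc_cexp_int_mul_I (n : ℤ) :
    ∫ t in Set.Ioc (-π) π, Complex.exp (n * t * Complex.I) = if n = 0 then 2 * π else 0 := by
  rw [← intervalIntegral.integral_of_le (by linarith [pi_pos])]
  split_ifs with hn
  · simp [hn, two_mul]
  · have hc : (n * Complex.I : ℂ) ≠ 0 := by simp [hn]
    simp_rw [mul_right_comm _ _ Complex.I]
    rw [integral_exp_mul_complex hc]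
    have hper : Complex.exp (n * Complex.I * π) = Complex.exp (n * Complex.I * (-π)) := by
      rw [show (n * Complex.I * π : ℂ) = n * Complex.I * (-π) + n * (2 * π * Complex.I) by ring,
        Complex.exp_add, Complex.exp_int_mul_two_pi_mul_I, mul_one]
    rw [hper, Complex.ofReal_neg, sub_self, zero_div, Complex.ofReal_zero]

section CosMode

variable {V : Type*} [Fintype V]

noncomputable def cosMode (m : V → ℤ) (θ : V → ℝ) : ℝ := Real.cos (∑ x, (m x : ℝ) * θ x)

@[fun_prop]
theorem continuous_cosMode (m : V → ℤ) : Continuous (cosMode m) := by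
  unfold cosMode; fun_prop

theorem abs_cosMode_le_one (m : V → ℤ) (θ : V → ℝ) : |cosMode m θ| ≤ 1 := abs_cos_le_one _

theorem two_mul_cosMode_mul_cosMode (w k : V → ℤ) (θ : V → ℝ) :
    2 * (cosMode w θ * cosMode k θ) = cosMode (w + k) θ + cosMode (w - k) θ := by
  simp only [cosMode, Pi.add_apply, Pi.sub_apply, Int.cast_add, Int.cast_sub, add_mul, sub_mul,
    sum_add_distrib, sum_sub_distrib, cos_add, cos_sub]
  ring

theorem cosMode_eq_re_prod_cexp (m : V → ℤ) (θ : V → ℝ) :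
    cosMode m θ = (∏ x, Complex.exp ((m x : ℝ) * θ x * Complex.I)).re := by
  rw [← Complex.exp_sum, ← sum_mul, cosMode, ← Complex.exp_ofReal_mul_I_re]
  push_cast; rfl

instance isFiniteMeasure_aprioriXY : IsFiniteMeasure (aprioriXY V) := by
  unfold aprioriXY; infer_instance

theorem integral_cosMode_aprioriXY_nonneg (m : V → ℤ) : 0 ≤ ∫ θ, cosMode m θ ∂aprioriXY V := by
  have hint : Integrable (fun θ : V → ℝ => ∏ x, Complex.exp ((m x : ℝ) * θ x * Complex.I))
      (aprioriXY V) := by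
    refine .of_bound (Continuous.aestronglyMeasurable (by fun_prop)) 1 (ae_of_all _ fun θ => ?_)
    rw [norm_prod]
    refine prod_le_one (fun _ _ => norm_nonneg _) fun x _ => ?_
    rw [← Complex.ofReal_mul, Complex.norm_exp_ofReal_mul_I]
  simp_rw [cosMode_eq_re_prod_cexp, ← RCLike.re_to_complex, integral_re hint]
  rw [aprioriXY,
    integral_fintype_prod_eq_prod fun x (t : ℝ) => Complex.exp ((m x : ℝ) * t * Complex.I)]
  simp_rw [Complex.ofReal_intCast, integral_Ioc_cexp_int_mul_I]
  rw [RCLike.re_to_complex, ← Complex.ofReal_prod, Complex.ofReal_re]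
  exact prod_nonneg fun x _ => by split_ifs <;> positivity

noncomputable def cosPoly (s : Finset (V → ℤ)) (J : (V → ℤ) → ℝ) (θ : V → ℝ) : ℝ :=
  ∑ k ∈ s, J k * cosMode k θ

variable {s : Finset (V → ℤ)} {J : (V → ℤ) → ℝ}

@[fun_prop]
theorem continuous_cosPoly : Continuous (cosPoly s J) := by
  unfold cosPoly; fun_prop

theorem abs_cosPoly_le (hJ : ∀ k ∈ s, 0 ≤ J k) (θ : V → ℝ) :
    |cosPoly s J θ| ≤ ∑ k ∈ s, J k := by
  refine (abs_sum_le_sum_abs _ _).trans (sum_le_sum fun k hk => ?_)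
  rw [abs_mul, abs_of_nonneg (hJ k hk)]
  exact mul_le_of_le_one_right (hJ k hk) (abs_cosMode_le_one k θ)

theorem genXYHam_eq_neg_cosPoly (hs : (Function.support J).Finite) (θ : V → ℝ) :
    genXYHam J θ = -cosPoly hs.toFinset J θ := by
  rw [genXYHam, cosPoly, finsum_eq_sum_of_support_subset _ (by
    rw [hs.coe_toFinset]; exact Function.support_mul_subset_left _ _)]
  rfl

variable {μ : Measure (V → ℝ)}

theorem integral_cosMode_mul_cosPoly_mul_nonneg (hJ : ∀ k ∈ s, 0 ≤ J k) {g : (V → ℝ) → ℝ}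
    (hg : Integrable g μ) (hpos : ∀ w, 0 ≤ ∫ θ, cosMode w θ * g θ ∂μ) (w : V → ℤ) :
    0 ≤ ∫ θ, cosMode w θ * (cosPoly s J θ * g θ) ∂μ := by
  have hint : ∀ k, Integrable (fun θ => cosMode k θ * g θ) μ := fun k =>
    hg.bdd_mul (continuous_cosMode k).aestronglyMeasurable (ae_of_all _ (abs_cosMode_le_one k))
  have hexpand : ∀ θ, cosMode w θ * (cosPoly s J θ * g θ) =
      ∑ k ∈ s, J k / 2 * (cosMode (w + k) θ * g θ + cosMode (w - k) θ * g θ) := by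
    intro θ
    simp only [cosPoly, sum_mul, mul_sum]
    refine sum_congr rfl fun k _ => ?_
    rw [← add_mul, ← two_mul_cosMode_mul_cosMode]
    ring
  simp_rw [hexpand]
  rw [integral_finsetSum _ fun k _ => by exact ((hint _).add (hint _)).const_mul _]
  refine sum_nonneg fun k hk => ?_
  rw [integral_const_mul, integral_add (hint _) (hint _)]
  exact mul_nonneg (div_nonneg (hJ k hk) zero_le_two) (add_nonneg (hpos _) (hpos _))

theorem integral_cosMode_mul_cosPoly_pow_nonneg [IsFiniteMeasure μ] (hJ : ∀ k ∈ s, 0 ≤ J k)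
    (h0 : ∀ w, 0 ≤ ∫ θ, cosMode w θ ∂μ) (n : ℕ) (w : V → ℤ) :
    0 ≤ ∫ θ, cosMode w θ * cosPoly s J θ ^ n ∂μ := by
  induction n generalizing w with
  | zero => simpa using h0 w
  | succ n ih =>
    have hint : Integrable (fun θ => cosPoly s J θ ^ n) μ :=
      .of_bound (Continuous.aestronglyMeasurable (by fun_prop)) _ (ae_of_all _ fun θ => by
        simpa [norm_pow] using pow_le_pow_left₀ (abs_nonneg _) (abs_cosPoly_le hJ θ) n)
    simp_rw [pow_succ']
    exact integral_cosMode_mul_cosPoly_mul_nonneg hJ hint ih w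

end CosMode

/-- first Ginibre inequality: for the general ferromagnetic XY model
with nonnegative, finitely supported couplings `J`, all correlation functions
`⟨cos(mθ)⟩_{V,J}` are nonnegative. -/
theorem ginibre_nonneg {V : Type*} [Fintype V]
    (J : (V → ℤ) → ℝ) (hJ : ∀ m, 0 ≤ J m)
    (hs : (Function.support J).Finite) (m : V → ℤ) :
    0 ≤ genXYExp J (fun θ => Real.cos (∑ x, (m x : ℝ) * θ x)) := by
  have hJs : ∀ k ∈ hs.toFinset, 0 ≤ J k := fun k _ => hJ k
  have hnum : 0 ≤ ∫ θ, cosMode m θ * exp (cosPoly hs.toFinset J θ) ∂aprioriXY V :=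
    integral_mul_exp_nonneg_of_integral_mul_pow_nonneg
      (Integrable.of_bound (continuous_cosMode m).aestronglyMeasurable 1
        (ae_of_all _ (abs_cosMode_le_one m)))
      continuous_cosPoly.aestronglyMeasurable (abs_cosPoly_le hJs)
      (integral_cosMode_mul_cosPoly_pow_nonneg hJs integral_cosMode_aprioriXY_nonneg · m)
  simp only [genXYExp, genXYHam_eq_neg_cosPoly hs, neg_neg]
  exact div_nonneg hnum (integral_nonneg fun θ => (exp_pos _).le)
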